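/- (Theorem 4.2) Let s = 2 and c_1 = c_2. Suppose (A,b) is symplectic with b_1 ≠ 0 and b_2 ≠ 0, and there exists an invertible real n×n matrix P with P·K·P^{−1} = −K and P·Dg(y)·P^{−1} = −Dg(y) for all y ∈ ℝ^n. Then at every point y ∈ ℝ^n where I_{2n} − h·Ā·F(y) is invertible, the special symplectic exponential integrator satisfies det(Dφ_h(y)) = 1; that is, it preserves volume for vector fields of class 𝓢. -/

import Mathlib

open Matrix

/-- The Jacobian matrix of a map `f : ℝ^ι → ℝ^ι` at a point `y`. -/
noncomputable def jac {ι : Type*} [Fintype ι] [DecidableEq ι]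
    (f : (ι → ℝ) → (ι → ℝ)) (y : ι → ℝ) : Matrix ι ι ℝ :=
  LinearMap.toMatrix' ((fderiv ℝ f y).toLinearMap)

/-- A Runge–Kutta pair `(A, b)` is symplectic. -/
def IsSymplecticRK {s : ℕ} (A : Matrix (Fin s) (Fin s) ℝ) (b : Fin s → ℝ) : Prop :=
  ∀ i j, b i * A i j + b j * A j i - b i * b j = 0

/-!
Put `Gᵢ = Dg(kᵢ y)`, `Yᵢ = h Gᵢ`, `Lᵢ = Dkᵢ(y)` and `E_t = exp (t h K)`. As `c₁ = c₂ = c`, the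
stage Jacobians satisfy `Lᵢ = E_c + ∑ⱼ aᵢⱼ Yⱼ Lⱼ` and `Dφ(y) = E_{1-c} (E_c + ∑ᵢ bᵢ Yᵢ Lᵢ)`, while
`det (E_{1-c} E_c) = det (exp (h K)) = 1` because `h K` is conjugate to `-h K`.

For `Mᵢ = Lᵢ E_c⁻¹`, the Weinstein–Aronszajn identity `det (1 + U V) = det (1 + V U)` gives
`det (1 - Ā Y) · det (1 + ∑ᵢ bᵢ Yᵢ Mᵢ) = det (1 - Y ((A - 𝟙 bᵀ) ⊗ 1))`. Conjugation by `1 ⊗ P`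
changes the sign of `Y`, and symplecticity gives `aᵢᵢ - bᵢ = -aᵢᵢ` and
`(a₁₂ - b₂) (a₂₁ - b₁) = a₁₂ a₂₁`. A two-by-two block determinant only depends on the product of
the scalars in front of its off-diagonal blocks, so the right-hand side is `det (1 - Ā Y)`, which
is nonzero and cancels.
-/

open scoped Kronecker

section Jacobian

variable {ι m : Type*} [Fintype ι] [Fintype m] [DecidableEq m]

theorem jac_comp {f u : (m → ℝ) → (m → ℝ)} {y : m → ℝ}
    (hf : DifferentiableAt ℝ f (u y)) (hu : DifferentiableAt ℝ u y) :
    jac (fun z => f (u z)) y = jac f (u y) * jac u y := by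
  simp only [jac, fderiv_fun_comp y hf hu, ContinuousLinearMap.toLinearMap_comp,
    LinearMap.toMatrix'_comp]

theorem jac_mulVec_add_smul_sum (E : Matrix m m ℝ) (C : ι → Matrix m m ℝ) (h : ℝ)
    {w : ι → (m → ℝ) → (m → ℝ)} {y : m → ℝ} (hw : ∀ j, DifferentiableAt ℝ (w j) y) :
    jac (fun z => E *ᵥ z + h • ∑ j, C j *ᵥ w j z) y = E + h • ∑ j, C j * jac (w j) y := by
  have H : HasFDerivAt (fun z => E *ᵥ z + h • ∑ j, C j *ᵥ w j z)
      ((toLin' E).toContinuousLinearMap +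
        h • ∑ j, (toLin' (C j)).toContinuousLinearMap.comp (fderiv ℝ (w j) y)) y :=
    (toLin' E).toContinuousLinearMap.hasFDerivAt.add
      ((HasFDerivAt.fun_sum fun j _ => (toLin' (C j)).toContinuousLinearMap.hasFDerivAt.comp y
        (hw j).hasFDerivAt).const_smul h)
  rw [jac, H.fderiv]
  simp only [ContinuousLinearMap.toLinearMap_add, ContinuousLinearMap.toLinearMap_smul,
    ContinuousLinearMap.toLinearMap_sum, ContinuousLinearMap.toLinearMap_comp,
    LinearMap.coe_toContinuousLinearMap, map_add, map_smul, map_sum,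
    LinearMap.toMatrix'_comp, LinearMap.toMatrix'_toLin', jac]

theorem jac_mulVec_add_smul_sum_comp (E : Matrix m m ℝ) (C : ι → Matrix m m ℝ) (h : ℝ)
    {g : (m → ℝ) → (m → ℝ)} {w : ι → (m → ℝ) → (m → ℝ)} {y : m → ℝ}
    (hg : ∀ j, DifferentiableAt ℝ g (w j y)) (hw : ∀ j, DifferentiableAt ℝ (w j) y) :
    jac (fun z => E *ᵥ z + h • ∑ j, C j *ᵥ g (w j z)) y =
      E + h • ∑ j, C j * (jac g (w j y) * jac (w j) y) := by
  rw [jac_mulVec_add_smul_sum E C h (w := fun j z => g (w j z)) fun j => (hg j).comp y (hw j)]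
  simp only [jac_comp (hg _) (hw _)]

end Jacobian

section Exponential

variable {m : Type*} [Fintype m] [DecidableEq m]

theorem exp_smul_mul_exp_smul (K : Matrix m m ℝ) (a b : ℝ) :
    NormedSpace.exp (a • K) * NormedSpace.exp (b • K) = NormedSpace.exp ((a + b) • K) := by
  rw [add_smul, Matrix.exp_add_of_commute _ _ (((Commute.refl K).smul_left a).smul_right b)]

/-- `det (exp K)` is invariant under conjugation and inverted by `K ↦ -K`, so it is `±1`;
being the square of `det (exp (K / 2))`, it is `1`. -/
theorem det_exp_eq_one_of_conj_eq_neg {K P : Matrix m m ℝ} (hP : IsUnit P)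
    (hK : P * K * P⁻¹ = -K) : (NormedSpace.exp K).det = 1 := by
  have hneg : (NormedSpace.exp (-K)).det = (NormedSpace.exp K).det := by
    rw [← hK, Matrix.exp_conj _ _ hP, det_conj hP]
  have hinv : (NormedSpace.exp K).det * (NormedSpace.exp (-K)).det = 1 := by
    rw [← det_mul, ← Matrix.exp_add_of_commute _ _ (Commute.neg_right (Commute.refl K)),
      add_neg_cancel, NormedSpace.exp_zero, det_one]
  have hsq : (NormedSpace.exp K).det = (NormedSpace.exp ((1 / 2 : ℝ) • K)).det ^ 2 := by
    rw [sq, ← det_mul, exp_smul_mul_exp_smul]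
    norm_num
  rw [hneg] at hinv
  nlinarith [sq_nonneg (NormedSpace.exp ((1 / 2 : ℝ) • K)).det]

end Exponential

section Blocks

variable {ι m R : Type*}

/-- `Matrix.blockDiagonal` with the block index in the first coordinate. -/
def blockDiagonalFst [DecidableEq ι] [Zero R] (Y : ι → Matrix m m R) :
    Matrix (ι × m) (ι × m) R :=
  of fun p q => if p.1 = q.1 then Y p.1 p.2 q.2 else 0

def blockCol (Z : ι → Matrix m m R) : Matrix (ι × m) m R :=
  of fun p a => Z p.1 p.2 a

def blockRow (Z : ι → Matrix m m R) : Matrix m (ι × m) R :=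
  of fun a q => Z q.1 a q.2

theorem blockDiagonalFst_neg [DecidableEq ι] [Ring R] (Y : ι → Matrix m m R) :
    blockDiagonalFst (fun i => -Y i) = -blockDiagonalFst Y := by
  ext p q
  by_cases h : p.1 = q.1 <;> simp [blockDiagonalFst, h]

theorem smul_blockDiagonalFst [DecidableEq ι] [Semiring R] (a : R) (Y : ι → Matrix m m R) :
    a • blockDiagonalFst Y = blockDiagonalFst fun i => a • Y i := by
  ext p q
  by_cases h : p.1 = q.1 <;> simp [blockDiagonalFst, h]

theorem one_kronecker_eq_blockDiagonalFst [DecidableEq ι] [Semiring R] (P : Matrix m m R) :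
    (1 : Matrix ι ι R) ⊗ₖ P = blockDiagonalFst fun _ => P := by
  ext ⟨i, a⟩ ⟨j, c⟩
  simp [blockDiagonalFst, one_apply]

variable [Fintype m] [CommRing R]

theorem blockCol_one_mul_blockRow_smul_one [DecidableEq m] (b : ι → R) :
    blockCol (fun _ : ι => (1 : Matrix m m R)) * blockRow (fun i => b i • (1 : Matrix m m R)) =
      (of fun _ j => b j : Matrix ι ι R) ⊗ₖ (1 : Matrix m m R) := by
  ext ⟨i, a⟩ ⟨j, c⟩
  rw [mul_apply]
  simp [blockRow, blockCol, one_apply]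

variable [Fintype ι]

theorem blockRow_mul_blockCol (Z W : ι → Matrix m m R) :
    blockRow Z * blockCol W = ∑ i, Z i * W i := by
  ext a c
  simp [blockRow, blockCol, mul_apply, Fintype.sum_prod_type, Matrix.sum_apply]

theorem kronecker_one_mul_blockCol [DecidableEq m] (S : Matrix ι ι R) (Z : ι → Matrix m m R) :
    S ⊗ₖ (1 : Matrix m m R) * blockCol Z = blockCol fun i => ∑ j, S i j • Z j := by
  ext ⟨i, a⟩ c
  simp [blockCol, mul_apply, Fintype.sum_prod_type, one_apply, Matrix.sum_apply]

variable [DecidableEq ι]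

theorem blockDiagonalFst_mul_blockDiagonalFst (Y Z : ι → Matrix m m R) :
    blockDiagonalFst Y * blockDiagonalFst Z = blockDiagonalFst fun i => Y i * Z i := by
  ext ⟨i, a⟩ ⟨j, c⟩
  by_cases h : i = j <;> simp [blockDiagonalFst, mul_apply, Fintype.sum_prod_type, h]

theorem blockDiagonalFst_mul_kronecker_one_apply [DecidableEq m] (Y : ι → Matrix m m R)
    (S : Matrix ι ι R) (p q : ι × m) :
    (blockDiagonalFst Y * S ⊗ₖ (1 : Matrix m m R)) p q = S p.1 q.1 * Y p.1 p.2 q.2 := by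
  simp [blockDiagonalFst, mul_apply, Fintype.sum_prod_type, one_apply, mul_comm]

theorem blockDiagonalFst_mul_blockCol (Y Z : ι → Matrix m m R) :
    blockDiagonalFst Y * blockCol Z = blockCol fun i => Y i * Z i := by
  ext ⟨i, a⟩ c
  simp [blockDiagonalFst, blockCol, mul_apply, Fintype.sum_prod_type]

end Blocks

section Determinants

variable {ι m R : Type*} [Fintype ι] [DecidableEq ι] [Fintype m] [DecidableEq m] [CommRing R]

theorem mul_eq_neg_mul_of_conj_eq_neg {P X : Matrix m m R} (hP : IsUnit P)
    (hPX : P * X * P⁻¹ = -X) : P * X = -(X * P) := by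
  rw [← neg_mul, ← hPX, nonsing_inv_mul_cancel_right _ _ ((isUnit_iff_isUnit_det P).mp hP)]

theorem det_one_sub_eq_det_one_add_of_mul_eq_neg_mul {Q X : Matrix m m R} (hQ : IsUnit Q)
    (hQX : Q * X = -(X * Q)) : (1 - X).det = (1 + X).det := by
  have hconj : Q * (1 - X) = (1 + X) * Q := by
    rw [mul_sub, hQX, add_mul, mul_one, one_mul, sub_neg_eq_add]
  have hdet := congrArg det hconj
  rw [det_mul, det_mul, mul_comm (det (1 + X))] at hdet
  exact ((isUnit_iff_isUnit_det Q).mp hQ).mul_left_cancel hdet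

theorem det_one_sub_eq_det_one_add_blockDiagonalFst_mul_kronecker {P : Matrix m m R} (hP : IsUnit P)
    {Y : ι → Matrix m m R} (hPY : ∀ i, P * Y i * P⁻¹ = -Y i) (S : Matrix ι ι R) :
    (1 - blockDiagonalFst Y * S ⊗ₖ (1 : Matrix m m R)).det =
      (1 + blockDiagonalFst Y * S ⊗ₖ (1 : Matrix m m R)).det := by
  have hQ : IsUnit ((1 : Matrix ι ι R) ⊗ₖ P) := by
    rw [isUnit_iff_isUnit_det, det_kronecker, det_one, one_pow, one_mul]
    exact ((isUnit_iff_isUnit_det P).mp hP).pow _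
  have hQY : (1 : Matrix ι ι R) ⊗ₖ P * blockDiagonalFst Y =
      -(blockDiagonalFst Y * (1 : Matrix ι ι R) ⊗ₖ P) := by
    rw [one_kronecker_eq_blockDiagonalFst P, blockDiagonalFst_mul_blockDiagonalFst,
      blockDiagonalFst_mul_blockDiagonalFst, ← blockDiagonalFst_neg]
    simp only [mul_eq_neg_mul_of_conj_eq_neg hP (hPY _)]
  have hQS : (1 : Matrix ι ι R) ⊗ₖ P * S ⊗ₖ (1 : Matrix m m R) =
      S ⊗ₖ (1 : Matrix m m R) * (1 : Matrix ι ι R) ⊗ₖ P := by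
    rw [← mul_kronecker_mul, ← mul_kronecker_mul, one_mul, mul_one, mul_one, one_mul]
  refine det_one_sub_eq_det_one_add_of_mul_eq_neg_mul hQ ?_
  rw [← mul_assoc, hQY, neg_mul, mul_assoc, hQS, mul_assoc]

theorem det_one_sub_mul_det_one_add_sum_smul {A : Matrix ι ι R} {b : ι → R}
    {Y M : ι → Matrix m m R} (hM : ∀ i, M i = 1 + ∑ j, A i j • (Y j * M j)) :
    (1 - A ⊗ₖ (1 : Matrix m m R) * blockDiagonalFst Y).det * (1 + ∑ i, b i • (Y i * M i)).det =
      (1 - blockDiagonalFst Y * (A - of fun _ j => b j) ⊗ₖ (1 : Matrix m m R)).det := by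
  set D := blockDiagonalFst Y
  set Ā := A ⊗ₖ (1 : Matrix m m R)
  set E := blockCol fun _ : ι => (1 : Matrix m m R)
  set B := blockRow fun i => b i • (1 : Matrix m m R)
  have hstage : (1 - Ā * D) * blockCol M = E := by
    have hcol : blockCol M = E + Ā * (D * blockCol M) := by
      rw [blockDiagonalFst_mul_blockCol, kronecker_one_mul_blockCol]
      ext p a
      simp only [blockCol, of_apply, Matrix.add_apply, E]
      rw [hM]
      rfl
    rw [Matrix.sub_mul, Matrix.one_mul, Matrix.mul_assoc]
    nth_rewrite 1 [hcol]
    abel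
  have hupdate : ∑ i, b i • (Y i * M i) = B * (D * blockCol M) := by
    rw [blockDiagonalFst_mul_blockCol, blockRow_mul_blockCol]
    simp only [smul_mul, one_mul]
  have hkron : (A - of fun _ j => b j) ⊗ₖ (1 : Matrix m m R) = Ā - E * B := by
    rw [blockCol_one_mul_blockRow_smul_one]
    ext p q
    simp [Ā, sub_mul]
  calc (1 - Ā * D).det * (1 + ∑ i, b i • (Y i * M i)).det
      = (1 - D * Ā).det * (1 + D * blockCol M * B).det := by
        rw [det_one_sub_mul_comm, hupdate, det_one_add_mul_comm, Matrix.mul_assoc]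
    _ = ((1 - D * Ā) * (1 + D * blockCol M * B)).det := (det_mul _ _).symm
    _ = (1 - D * (Ā - E * B)).det := by
        have hswap : (1 - D * Ā) * D = D * (1 - Ā * D) := by
          rw [sub_mul, mul_sub, one_mul, mul_one, mul_assoc]
        rw [mul_add, mul_one, ← Matrix.mul_assoc, ← Matrix.mul_assoc, hswap,
          Matrix.mul_assoc D, hstage, mul_sub, Matrix.mul_assoc]
        abel_nf
    _ = _ := by rw [hkron]

end Determinants

section TwoBlocks

variable {m K : Type*} [Fintype m] [DecidableEq m] [Field K]

/-- Conjugating by `fromBlocks (α • 1) 0 0 1` moves the factor `α` between the off-diagonal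
blocks. -/
theorem det_fromBlocks_smul_smul (X B C W : Matrix m m K) (α β : K) :
    (fromBlocks X (α • B) (β • C) W).det = (fromBlocks X B ((α * β) • C) W).det := by
  rcases eq_or_ne α 0 with rfl | hα
  · simp [det_fromBlocks_zero₁₂]
  set Q : Matrix (m ⊕ m) (m ⊕ m) K := fromBlocks (α • 1) 0 0 1
  have hconj : Q * fromBlocks X B ((α * β) • C) W = fromBlocks X (α • B) (β • C) W * Q := by
    simp only [Q, fromBlocks_multiply]
    simp [smul_smul, mul_comm α β]
  have hQ : Q.det ≠ 0 := by
    simp [Q, hα]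
  have hdet := congrArg det hconj
  rw [det_mul, det_mul, mul_comm (det (fromBlocks X (α • B) _ _))] at hdet
  exact (mul_left_cancel₀ hQ hdet).symm

theorem det_one_add_blockDiagonalFst_mul_kronecker_fin_two (Y : Fin 2 → Matrix m m K)
    (S : Matrix (Fin 2) (Fin 2) K) :
    (1 + blockDiagonalFst Y * S ⊗ₖ (1 : Matrix m m K)).det =
      (fromBlocks (1 + S 0 0 • Y 0) (S 0 1 • Y 0) (S 1 0 • Y 1) (1 + S 1 1 • Y 1)).det := by
  let e : m ⊕ m ≃ Fin 2 × m :=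
    (Equiv.boolProdEquivSum m).symm.trans (finTwoEquiv.symm.prodCongr (Equiv.refl m))
  rw [← det_submatrix_equiv_self e]
  congr 1
  ext (a | a) (c | c) <;>
    simp [e, finTwoEquiv, blockDiagonalFst_mul_kronecker_one_apply, one_apply, mul_comm]

theorem det_one_add_blockDiagonalFst_mul_kronecker_congr (Y : Fin 2 → Matrix m m K)
    {S T : Matrix (Fin 2) (Fin 2) K} (h₀ : S 0 0 = T 0 0) (h₁ : S 1 1 = T 1 1)
    (h₀₁ : S 0 1 * S 1 0 = T 0 1 * T 1 0) :
    (1 + blockDiagonalFst Y * S ⊗ₖ (1 : Matrix m m K)).det =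
      (1 + blockDiagonalFst Y * T ⊗ₖ (1 : Matrix m m K)).det := by
  rw [det_one_add_blockDiagonalFst_mul_kronecker_fin_two,
    det_one_add_blockDiagonalFst_mul_kronecker_fin_two, h₀, h₁, det_fromBlocks_smul_smul,
    det_fromBlocks_smul_smul, h₀₁]

end TwoBlocks

namespace IsSymplecticRK

section

variable {s : ℕ} {A : Matrix (Fin s) (Fin s) ℝ} {b : Fin s → ℝ}

theorem diag_sub_eq_neg (hs : IsSymplecticRK A b) {i : Fin s} (hb : b i ≠ 0) :
    A i i - b i = -A i i := by
  have h : b i * (2 * A i i - b i) = 0 := by linear_combination hs i i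
  linarith [(mul_eq_zero.mp h).resolve_left hb]

theorem sub_mul_sub (hs : IsSymplecticRK A b) (i j : Fin s) :
    (A i j - b j) * (A j i - b i) = A i j * A j i := by
  linear_combination -(hs i j)

end

theorem det_one_add_sum_smul_eq_one {m : Type*} [Fintype m] [DecidableEq m]
    {A : Matrix (Fin 2) (Fin 2) ℝ} {b : Fin 2 → ℝ} (hsymp : IsSymplecticRK A b)
    (hb : ∀ i, b i ≠ 0) {P : Matrix m m ℝ} (hP : IsUnit P) {Y M : Fin 2 → Matrix m m ℝ}
    (hPY : ∀ i, P * Y i * P⁻¹ = -Y i) (hM : ∀ i, M i = 1 + ∑ j, A i j • (Y j * M j))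
    (hinv : IsUnit (1 - A ⊗ₖ (1 : Matrix m m ℝ) * blockDiagonalFst Y)) :
    (1 + ∑ i, b i • (Y i * M i)).det = 1 := by
  have hcongr : (1 + blockDiagonalFst Y * (A - of fun _ j => b j) ⊗ₖ (1 : Matrix m m ℝ)).det =
      (1 + blockDiagonalFst Y * (-A) ⊗ₖ (1 : Matrix m m ℝ)).det :=
    det_one_add_blockDiagonalFst_mul_kronecker_congr Y (hsymp.diag_sub_eq_neg (hb 0))
      (hsymp.diag_sub_eq_neg (hb 1)) (by simpa using hsymp.sub_mul_sub 0 1)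
  have hneg : (-A) ⊗ₖ (1 : Matrix m m ℝ) = -(A ⊗ₖ (1 : Matrix m m ℝ)) := by
    ext
    simp
  have key := det_one_sub_mul_det_one_add_sum_smul (b := b) hM
  rw [det_one_sub_eq_det_one_add_blockDiagonalFst_mul_kronecker hP hPY, hcongr, hneg, mul_neg,
    ← sub_eq_add_neg, det_one_sub_mul_comm (blockDiagonalFst Y)] at key
  exact (mul_eq_left₀ ((isUnit_iff_isUnit_det _).mp hinv).ne_zero).mp key

theorem det_add_sum_smul_eq_det {m : Type*} [Fintype m] [DecidableEq m]
    {A : Matrix (Fin 2) (Fin 2) ℝ} {b : Fin 2 → ℝ} (hsymp : IsSymplecticRK A b)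
    (hb : ∀ i, b i ≠ 0) {P : Matrix m m ℝ} (hP : IsUnit P) {Y L : Fin 2 → Matrix m m ℝ}
    (hPY : ∀ i, P * Y i * P⁻¹ = -Y i) {E : Matrix m m ℝ} (hE : IsUnit E)
    (hL : ∀ i, L i = E + ∑ j, A i j • (Y j * L j))
    (hinv : IsUnit (1 - A ⊗ₖ (1 : Matrix m m ℝ) * blockDiagonalFst Y)) :
    (E + ∑ i, b i • (Y i * L i)).det = E.det := by
  have hE' := (isUnit_iff_isUnit_det E).mp hE
  have hM : ∀ i, L i * E⁻¹ = 1 + ∑ j, A i j • (Y j * (L j * E⁻¹)) := fun i => by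
    conv_lhs => rw [hL i]
    simp only [Matrix.add_mul, mul_nonsing_inv _ hE', Finset.sum_mul, smul_mul, Matrix.mul_assoc]
  have hfactor : E + ∑ i, b i • (Y i * L i) = (1 + ∑ i, b i • (Y i * (L i * E⁻¹))) * E := by
    simp only [Matrix.add_mul, Matrix.one_mul, Finset.sum_mul, smul_mul, Matrix.mul_assoc,
      nonsing_inv_mul _ hE', Matrix.mul_one]
  rw [hfactor, det_mul, hsymp.det_one_add_sum_smul_eq_one hb hP hPY hM hinv, one_mul]

end IsSymplecticRK

/-- **Theorem 4.2.** Two-stage special symplectic exponential integrators with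
`c₁ = c₂` preserve volume for vector fields of class `𝓢`. -/
theorem stmt_10 (n : ℕ) (h : ℝ) (K : Matrix (Fin n) (Fin n) ℝ) (c : Fin 2 → ℝ)
    (hc : c 0 = c 1)
    (g : (Fin n → ℝ) → (Fin n → ℝ)) (hg : Differentiable ℝ g)
    (A : Matrix (Fin 2) (Fin 2) ℝ) (b : Fin 2 → ℝ)
    (hsymp : IsSymplecticRK A b) (hb : ∀ i, b i ≠ 0)
    (P : Matrix (Fin n) (Fin n) ℝ) (hP : IsUnit P)
    (hK : P * K * P⁻¹ = -K)
    (hgS : ∀ y, P * jac g y * P⁻¹ = -(jac g y))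
    (k : Fin 2 → (Fin n → ℝ) → (Fin n → ℝ))
    (hk : ∀ i, Differentiable ℝ (k i))
    (hkdef : ∀ i y, k i y =
      (NormedSpace.exp ((c i * h) • K)).mulVec y +
        h • ∑ j, (A i j • NormedSpace.exp (((c i - c j) * h) • K)).mulVec (g (k j y)))
    (φ : (Fin n → ℝ) → (Fin n → ℝ))
    (hφ : ∀ y, φ y =
      (NormedSpace.exp (h • K)).mulVec y +
        h • ∑ i, (b i • NormedSpace.exp (((1 - c i) * h) • K)).mulVec (g (k i y)))
    (F : (Fin n → ℝ) → Matrix (Fin 2 × Fin n) (Fin 2 × Fin n) ℝ)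
    (hF : ∀ y p q, F y p q = if p.1 = q.1 then jac g (k p.1 y) p.2 q.2 else 0)
    (Ablk : Matrix (Fin 2 × Fin n) (Fin 2 × Fin n) ℝ)
    (hAblk : ∀ p q, Ablk p q =
      A p.1 q.1 * NormedSpace.exp (((c p.1 - c q.1) * h) • K) p.2 q.2) :
    ∀ y : Fin n → ℝ,
      IsUnit ((1 : Matrix (Fin 2 × Fin n) (Fin 2 × Fin n) ℝ) - h • (Ablk * F y)) →
        (jac φ y).det = 1 := by
  intro y hy
  have hc_eq : ∀ i, c i = c 0 := fun i => by fin_cases i <;> simp [hc]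
  have hexp_zero : ∀ i j, NormedSpace.exp (((c i - c j) * h) • K) = 1 := fun i j => by
    rw [hc_eq i, hc_eq j, sub_self, zero_mul, zero_smul, NormedSpace.exp_zero]
  set Ec := NormedSpace.exp ((c 0 * h) • K)
  set Ed := NormedSpace.exp (((1 - c 0) * h) • K)
  set Y := fun i => h • jac g (k i y)
  have hjac_k : ∀ i, jac (k i) y = Ec + ∑ j, A i j • (Y j * jac (k j) y) := fun i => by
    rw [show k i = _ from funext (hkdef i),
      jac_mulVec_add_smul_sum_comp _ _ _ (fun j => hg _) fun j => hk j y]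
    simp only [hexp_zero, hc_eq i, Finset.smul_sum, Y, smul_mul_assoc, Matrix.one_mul, smul_smul,
      mul_comm h]
    rfl
  have hEdEc : Ed * Ec = NormedSpace.exp (h • K) := by
    rw [exp_smul_mul_exp_smul, sub_mul, one_mul, sub_add_cancel]
  have hjac_φ : jac φ y = Ed * (Ec + ∑ i, b i • (Y i * jac (k i) y)) := by
    rw [show φ = _ from funext hφ,
      jac_mulVec_add_smul_sum_comp _ _ _ (fun j => hg _) fun j => hk j y, mul_add, hEdEc,
      Finset.mul_sum, Finset.smul_sum]
    simp only [hc_eq, Y, smul_mul_assoc, mul_smul_comm, smul_smul, mul_comm h]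
    rfl
  have hinv : IsUnit (1 - A ⊗ₖ (1 : Matrix (Fin n) (Fin n) ℝ) * blockDiagonalFst Y) := by
    have hAblk' : Ablk = A ⊗ₖ (1 : Matrix (Fin n) (Fin n) ℝ) := by
      ext p q
      rw [hAblk, hexp_zero]
      rfl
    have hF' : F y = blockDiagonalFst fun i => jac g (k i y) := by
      ext p q
      rw [hF]
      rfl
    rwa [hAblk', hF', ← Matrix.mul_smul, smul_blockDiagonalFst] at hy
  have hPY : ∀ i, P * Y i * P⁻¹ = -Y i := fun i => by
    simp only [Y, Matrix.mul_smul, Matrix.smul_mul, hgS, smul_neg]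
  have hdet_exp : (NormedSpace.exp (h • K)).det = 1 :=
    det_exp_eq_one_of_conj_eq_neg hP (by rw [Matrix.mul_smul, Matrix.smul_mul, hK, smul_neg])
  rw [hjac_φ, det_mul, hsymp.det_add_sum_smul_eq_det hb hP hPY (Matrix.isUnit_exp _) hjac_k hinv,
    ← det_mul, hEdEc, hdet_exp]
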